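/- Let B be a bounded linear operator on E with ‖A − B‖ < 1/4. Then there is no f ∈ E satisfying f − Bf = 1 (the constant function equal to 1 on K); in particular the operator I − B is not surjective. -/

import Mathlib

noncomputable section

open Metric

/-- The closed disk of radius 1/2 centered at 1 in ℂ. -/
def K : Set ℂ := Metric.closedBall 1 (1/2)

instance : CompactSpace K :=
  isCompact_iff_compactSpace.mp (isCompact_closedBall 1 (1/2))

open scoped Classical in
/-- Extension of a continuous function on K to ℂ by 0. -/
def extendFn (f : C(K, ℂ)) : ℂ → ℂ := fun z => if h : z ∈ K then f ⟨z, h⟩ else 0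

/-- The subspace of C(K, ℂ) of functions holomorphic on the interior of K. -/
def Esub : Submodule ℂ C(K, ℂ) where
  carrier := {f | DifferentiableOn ℂ (extendFn f) (interior K)}
  add_mem' := by
    intro f g hf hg
    have h : extendFn (f + g) = extendFn f + extendFn g := by
      funext z; by_cases h : z ∈ K <;> simp [extendFn, h]
    simpa [Set.mem_setOf_eq, h] using hf.add hg
  zero_mem' := by
    have h : extendFn (0 : C(K, ℂ)) = fun _ => 0 := by
      funext z; by_cases h : z ∈ K <;> simp [extendFn, h]
    simpa [Set.mem_setOf_eq, h] using differentiableOn_const (0 : ℂ)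
  smul_mem' := by
    intro c f hf
    have h : extendFn (c • f) = c • extendFn f := by
      funext z; by_cases h : z ∈ K <;> simp [extendFn, h]
    simpa [Set.mem_setOf_eq, h] using hf.const_smul c

/-- The Banach space E. -/
abbrev E : Type := ↥Esub

/-- The constant function 1 as an element of E. -/
def oneE : E :=
  ⟨1, by
    have h : ∀ z ∈ interior K, extendFn (1 : C(K, ℂ)) z = 1 := by
      intro z hz; simp [extendFn, interior_subset hz]
    exact (differentiableOn_const (1 : ℂ)).congr h⟩

/-! Write `h = (A - B) f`, so that `‖h‖ ≤ ‖A - B‖ ‖f‖`. A solution of `f - B f = 1` satisfies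
`(1 - z) f(z) = 1 - h(z)` on `K`. At `z = 1` this forces `h(1) = 1`, hence `1 ≤ ‖A - B‖ ‖f‖`.
On the boundary circle `|1 - z| = 1/2`, so `|f| ≤ 2 (1 + ‖A - B‖ ‖f‖)` there, and by the maximum
modulus principle on all of `K`. For `‖A - B‖ < 1/4` the two bounds are incompatible. -/

lemma one_mem_K : (1 : ℂ) ∈ K := mem_closedBall_self (by norm_num)

instance : Nonempty K := ⟨⟨1, one_mem_K⟩⟩

lemma interior_K : interior K = ball (1 : ℂ) (1/2) := by
  rw [K, interior_closedBall _ (by norm_num)]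

lemma closure_ball_eq_K : closure (ball (1 : ℂ) (1/2)) = K := by
  rw [K, closure_ball _ (by norm_num)]

lemma extendFn_coe (f : C(K, ℂ)) (z : K) : extendFn f z = f z := by
  simp [extendFn, z.2]

lemma continuousOn_extendFn (f : C(K, ℂ)) : ContinuousOn (extendFn f) K := by
  rw [continuousOn_iff_continuous_domRestrict]
  convert f.continuous using 1
  ext z
  exact extendFn_coe f z

lemma diffContOnCl_extendFn (f : E) : DiffContOnCl ℂ (extendFn (f : C(K, ℂ))) (ball 1 (1/2)) :=
  ⟨by rw [← interior_K]; exact f.2, by rw [closure_ball_eq_K]; exact continuousOn_extendFn f⟩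

lemma E.norm_le_of_forall_sphere_norm_le (f : E) {C : ℝ}
    (hC : ∀ z : K, (z : ℂ) ∈ sphere (1 : ℂ) (1/2) → ‖(f : C(K, ℂ)) z‖ ≤ C) : ‖f‖ ≤ C := by
  rw [Submodule.coe_norm, ContinuousMap.norm_le_of_nonempty]
  intro z
  rw [← extendFn_coe]
  refine Complex.norm_le_of_forall_mem_frontier_norm_le isBounded_ball (diffContOnCl_extendFn f)
    (fun w hw => ?_) (by rw [closure_ball_eq_K]; exact z.2)
  rw [frontier_ball _ (by norm_num)] at hw
  have hwK : w ∈ K := sphere_subset_closedBall hw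
  rw [extendFn_coe f ⟨w, hwK⟩]
  exact hC ⟨w, hwK⟩ hw

lemma one_sub_mul_eq_of_sub_apply_eq_oneE {A B : E →L[ℂ] E}
    (hA : ∀ (f : E) (z : K), ((A f : C(K, ℂ)) z) = (z : ℂ) * ((f : C(K, ℂ)) z))
    {f : E} (hf : f - B f = oneE) (z : K) :
    (1 - (z : ℂ)) * (f : C(K, ℂ)) z = 1 - (((A - B) f : E) : C(K, ℂ)) z := by
  have hfz : (f : C(K, ℂ)) z - (B f : C(K, ℂ)) z = 1 := by
    simpa [oneE] using congrArg (fun g : E => (g : C(K, ℂ)) z) hf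
  have hAB : (((A - B) f : E) : C(K, ℂ)) z = (A f : C(K, ℂ)) z - (B f : C(K, ℂ)) z := rfl
  linear_combination hfz + hA f z + hAB

lemma quarter_le_of_one_le_mul_of_le_two_mul {δ x : ℝ} (hx : 0 ≤ x) (h1 : 1 ≤ δ * x)
    (h2 : x ≤ 2 * (1 + δ * x)) : 1/4 ≤ δ := by
  by_contra! hδ
  have hx' : 0 < x := by nlinarith
  nlinarith [mul_pos (sub_pos.2 hδ) hx']

/-- If ‖A − B‖ < 1/4, then the equation f − Bf = 1 has no solution f ∈ E;
in particular I − B is not surjective. -/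
theorem id_sub_B_not_surjective (A : E →L[ℂ] E)
    (hA : ∀ (f : E) (z : K), ((A f : C(K, ℂ)) z) = (z : ℂ) * ((f : C(K, ℂ)) z))
    (B : E →L[ℂ] E) (hB : ‖A - B‖ < 1/4) :
    (¬ ∃ f : E, f - B f = oneE) ∧
    ¬ Function.Surjective ⇑((1 : E →L[ℂ] E) - B) := by
  have no_solution : ¬ ∃ f : E, f - B f = oneE := by
    rintro ⟨f, hf⟩
    have pointwise := one_sub_mul_eq_of_sub_apply_eq_oneE hA hf
    have h_le : ∀ z : K, ‖(((A - B) f : E) : C(K, ℂ)) z‖ ≤ ‖A - B‖ * ‖f‖ := fun z =>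
      (ContinuousMap.norm_coe_le_norm _ z).trans ((A - B).le_opNorm f)
    have lower : 1 ≤ ‖A - B‖ * ‖f‖ := by
      have h1 : (((A - B) f : E) : C(K, ℂ)) ⟨1, one_mem_K⟩ = 1 := by
        have := pointwise ⟨1, one_mem_K⟩
        change (1 - 1) * _ = _ at this
        linear_combination this
      calc (1 : ℝ) = ‖(((A - B) f : E) : C(K, ℂ)) ⟨1, one_mem_K⟩‖ := by rw [h1, norm_one]
        _ ≤ ‖A - B‖ * ‖f‖ := h_le _
    have upper : ‖f‖ ≤ 2 * (1 + ‖A - B‖ * ‖f‖) := by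
      refine E.norm_le_of_forall_sphere_norm_le f fun z hz => ?_
      have hdist : ‖1 - (z : ℂ)‖ = 1/2 := by rw [norm_sub_rev]; exact mem_sphere_iff_norm.mp hz
      have := congrArg norm (pointwise z)
      rw [norm_mul, hdist] at this
      linarith [norm_sub_le (1 : ℂ) ((((A - B) f : E) : C(K, ℂ)) z), norm_one (α := ℂ), h_le z]
    exact hB.not_ge (quarter_le_of_one_le_mul_of_le_two_mul (norm_nonneg f) lower upper)
  refine ⟨no_solution, fun hsurj => ?_⟩
  obtain ⟨f, hf⟩ := hsurj oneE
  exact no_solution ⟨f, hf⟩
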